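/- Let n_c, n_o, n_d be positive integers. Let V_{o,q} : ℝ^{n_o} → ℝ and V_{c,q} : ℝ^{n_c} → ℝ be functions with V_{o,q}(e) ≤ ᾱ_{o,q}(‖e‖) and V_{c,q}(x) ≤ ᾱ_{c,q}(‖x‖) for class K∞ functions ᾱ_{o,q}, ᾱ_{c,q}, let ℓ_q be a class K∞ function, and set V_q(x,e) := ℓ_q(V_{o,q}(e)) + V_{c,q}(x). Let V_p : ℝ^{n_c} × ℝ^{n_o} → ℝ be a function with V_p(x,e) ≥ α̲_p(‖(x,e)‖) for a class K∞ function α̲_p. Let g_c : ℝ^{n_c} × ℝ^{n_o} → ℝ^{n_c} and g_o : ℝ^{n_o} × ℝ^{n_d} → ℝ^{n_o} satisfy ‖g_c(x,e)‖ ≤ α̂_c(‖(x,e)‖) and ‖g_o(e,d)‖ ≤ α̂_o(‖e‖) + ρ̂_o(‖d‖) for class K∞ functions α̂_c, α̂_o, ρ̂_o. Then there exist class K∞ functions χ and ρ such that for all (x,e,d): V_q(g_c(x,e), g_o(e,d)) ≤ χ(V_p(x,e)) + ρ(‖d‖). -/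

import Mathlib

/-- A class `K` function: continuous, strictly increasing on `[0,∞)`, vanishing at `0`. -/
def IsClassK (f : ℝ → ℝ) : Prop :=
  ContinuousOn f (Set.Ici 0) ∧ StrictMonoOn f (Set.Ici 0) ∧ f 0 = 0

/-- A class `K∞` function: a class `K` function that is unbounded. -/
def IsClassKInf (f : ℝ → ℝ) : Prop :=
  IsClassK f ∧ ∀ M : ℝ, ∃ s, 0 ≤ s ∧ M < f s

/-!
With `L = ℓ_q ∘ ᾱ_{o,q}`, the bound on `g_o` and the weak triangle inequality
`γ (a + b) ≤ γ (2a) + γ (2b)` for class K functions give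
`ℓ_q (V_{o,q} (g_o e d)) ≤ L (2 α̂_o ‖e‖) + L (2 ρ̂_o ‖d‖)`, while
`V_{c,q} (g_c x e) ≤ ᾱ_{c,q} (α̂_c r)` with `r = ‖(x,e)‖ ≥ ‖e‖`. The `d`-free part is a class K∞
function `G` of `r`, and `r ≤ α̲_p⁻¹ (V_p x e)`, so `χ = G ∘ α̲_p⁻¹` and `ρ = L ∘ (2 ρ̂_o)` work.
-/

open Set

namespace IsClassK

variable {f g : ℝ → ℝ}

lemma mono (hf : IsClassK f) {a b : ℝ} (ha : 0 ≤ a) (hab : a ≤ b) : f a ≤ f b :=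
  hf.2.1.monotoneOn ha (ha.trans hab) hab

lemma nonneg (hf : IsClassK f) {s : ℝ} (hs : 0 ≤ s) : 0 ≤ f s :=
  hf.2.2 ▸ hf.mono le_rfl hs

lemma mapsTo (hf : IsClassK f) : MapsTo f (Ici 0) (Ici 0) := fun _ hs => hf.nonneg hs

lemma comp (hf : IsClassK f) (hg : IsClassK g) : IsClassK (fun s => f (g s)) :=
  ⟨hf.1.comp hg.1 hg.mapsTo, hf.2.1.comp hg.2.1 hg.mapsTo, by simp only [hg.2.2, hf.2.2]⟩

lemma add (hf : IsClassK f) (hg : IsClassK g) : IsClassK (fun s => f s + g s) :=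
  ⟨hf.1.add hg.1, fun _ ha _ hb hab => add_lt_add (hf.2.1 ha hb hab) (hg.2.1 ha hb hab),
    by simp only [hf.2.2, hg.2.2, add_zero]⟩

lemma apply_add_le (hf : IsClassK f) {a b : ℝ} (ha : 0 ≤ a) (hb : 0 ≤ b) :
    f (a + b) ≤ f (2 * a) + f (2 * b) := by
  rcases le_total a b with hab | hba
  · linarith [hf.mono (by positivity) (show a + b ≤ 2 * b by linarith),
      hf.nonneg (show 0 ≤ 2 * a by positivity)]
  · linarith [hf.mono (by positivity) (show a + b ≤ 2 * a by linarith),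
      hf.nonneg (show 0 ≤ 2 * b by positivity)]

end IsClassK

lemma isClassKInf_const_mul {c : ℝ} (hc : 0 < c) : IsClassKInf (fun s => c * s) :=
  ⟨⟨(continuous_const_mul c).continuousOn, fun _ _ _ _ hab => mul_lt_mul_of_pos_left hab hc,
    mul_zero c⟩, fun M => ⟨(|M| + 1) / c, by positivity, by
      simp only [mul_div_cancel₀ _ hc.ne']; linarith [le_abs_self M]⟩⟩

namespace IsClassKInf

variable {f g : ℝ → ℝ}

lemma comp (hf : IsClassKInf f) (hg : IsClassKInf g) : IsClassKInf (fun s => f (g s)) := by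
  refine ⟨hf.1.comp hg.1, fun M => ?_⟩
  obtain ⟨t, ht, hMt⟩ := hf.2 M
  obtain ⟨s, hs, hts⟩ := hg.2 t
  exact ⟨s, hs, hMt.trans_le (hf.1.mono ht hts.le)⟩

lemma add (hf : IsClassKInf f) (hg : IsClassK g) : IsClassKInf (fun s => f s + g s) := by
  refine ⟨hf.1.add hg, fun M => ?_⟩
  obtain ⟨s, hs, hMs⟩ := hf.2 M
  exact ⟨s, hs, by linarith [hg.nonneg hs]⟩

lemma surjOn (hf : IsClassKInf f) : SurjOn f (Ici 0) (Ici 0) := by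
  intro t ht
  obtain ⟨s, hs, hts⟩ := hf.2 t
  obtain ⟨a, ha, rfl⟩ := intermediate_value_Icc hs (hf.1.1.mono Icc_subset_Ici_self)
    (show t ∈ Icc (f 0) (f s) by rw [hf.1.2.2]; exact ⟨ht, hts.le⟩)
  exact ⟨a, ha.1, rfl⟩

/-- The inverse of the order isomorphism `[0,∞) ≃o [0,∞)` induced by `f`, extended to all of `ℝ`
through the projection onto `[0,∞)`. -/
lemma exists_leftInverse (hf : IsClassKInf f) :
    ∃ g : ℝ → ℝ, IsClassKInf g ∧ ∀ s, 0 ≤ s → g (f s) = s := by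
  let F : Ici (0 : ℝ) → Ici (0 : ℝ) := hf.1.mapsTo.restrict f _ _
  have hF : StrictMono F := fun a b hab => hf.1.2.1 a.2 b.2 hab
  let e := hF.orderIsoOfSurjective F (hf.1.mapsTo.restrict_surjective_iff.2 hf.surjOn)
  let g : ℝ → ℝ := fun t => e.symm (projIci 0 t)
  have hg : ∀ t (ht : 0 ≤ t), g t = e.symm ⟨t, ht⟩ := fun t ht => by
    simp only [g, projIci_of_mem (mem_Ici.2 ht)]
  have hgf : ∀ s, 0 ≤ s → g (f s) = s := fun s hs => by
    rw [hg _ (hf.1.nonneg hs)]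
    exact congrArg Subtype.val (hF.orderIsoOfSurjective_symm_apply_self F _ ⟨s, hs⟩)
  refine ⟨g, ⟨⟨?_, fun a ha b hb hab => ?_, ?_⟩, fun M => ?_⟩, hgf⟩
  · exact (continuous_subtype_val.comp (e.symm.continuous.comp
      ((continuous_const.max continuous_id).subtype_mk _))).continuousOn
  · rw [hg a ha, hg b hb]
    exact e.symm.strictMono (Subtype.mk_lt_mk.2 hab)
  · simpa only [hf.1.2.2] using hgf 0 le_rfl
  · refine ⟨f (|M| + 1), hf.1.nonneg (by positivity), ?_⟩
    rw [hgf _ (by positivity)]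
    linarith [le_abs_self M]

end IsClassKInf

theorem stmt_4_general (nc no nd : ℕ)
    (V_oq : EuclideanSpace ℝ (Fin no) → ℝ) (V_cq : EuclideanSpace ℝ (Fin nc) → ℝ)
    (hVoq_nonneg : ∀ e, 0 ≤ V_oq e)
    (αbar_oq αbar_cq ℓq αlo_p αhat_c αhat_o ρhat_o : ℝ → ℝ)
    (hαbar_oq : IsClassKInf αbar_oq) (hαbar_cq : IsClassKInf αbar_cq) (hℓq : IsClassKInf ℓq)
    (hαlo_p : IsClassKInf αlo_p) (hαhat_c : IsClassKInf αhat_c) (hαhat_o : IsClassKInf αhat_o)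
    (hρhat_o : IsClassKInf ρhat_o)
    (hVoq : ∀ e, V_oq e ≤ αbar_oq ‖e‖) (hVcq : ∀ x, V_cq x ≤ αbar_cq ‖x‖)
    (V_p : EuclideanSpace ℝ (Fin nc) → EuclideanSpace ℝ (Fin no) → ℝ)
    (hVp : ∀ x e, αlo_p (Real.sqrt (‖x‖ ^ 2 + ‖e‖ ^ 2)) ≤ V_p x e)
    (g_c : EuclideanSpace ℝ (Fin nc) → EuclideanSpace ℝ (Fin no) → EuclideanSpace ℝ (Fin nc))
    (g_o : EuclideanSpace ℝ (Fin no) → EuclideanSpace ℝ (Fin nd) → EuclideanSpace ℝ (Fin no))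
    (hgc : ∀ x e, ‖g_c x e‖ ≤ αhat_c (Real.sqrt (‖x‖ ^ 2 + ‖e‖ ^ 2)))
    (hgo : ∀ e d, ‖g_o e d‖ ≤ αhat_o ‖e‖ + ρhat_o ‖d‖) :
    ∃ χ ρ : ℝ → ℝ, IsClassKInf χ ∧ IsClassKInf ρ ∧
      ∀ (x : EuclideanSpace ℝ (Fin nc)) (e : EuclideanSpace ℝ (Fin no))
        (d : EuclideanSpace ℝ (Fin nd)),
        ℓq (V_oq (g_o e d)) + V_cq (g_c x e) ≤ χ (V_p x e) + ρ ‖d‖ := by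
  set L := fun s => ℓq (αbar_oq s)
  have hL : IsClassKInf L := hℓq.comp hαbar_oq
  have h2 : IsClassKInf (fun s : ℝ => 2 * s) := isClassKInf_const_mul two_pos
  set G := fun s => L (2 * αhat_o s) + αbar_cq (αhat_c s)
  have hG : IsClassKInf G := (hL.comp (h2.comp hαhat_o)).add (hαbar_cq.comp hαhat_c).1
  obtain ⟨β, hβ, hβα⟩ := hαlo_p.exists_leftInverse
  refine ⟨fun v => G (β v), fun t => L (2 * ρhat_o t), hG.comp hβ, hL.comp (h2.comp hρhat_o),
    fun x e d => ?_⟩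
  set r := Real.sqrt (‖x‖ ^ 2 + ‖e‖ ^ 2)
  have hr : 0 ≤ r := Real.sqrt_nonneg _
  have her : ‖e‖ ≤ r := Real.le_sqrt_of_sq_le (by nlinarith [norm_nonneg x])
  have hrV : r ≤ β (V_p x e) :=
    calc r = β (αlo_p r) := (hβα r hr).symm
      _ ≤ β (V_p x e) := hβ.1.mono (hαlo_p.1.nonneg hr) (hVp x e)
  have hobs : ℓq (V_oq (g_o e d)) ≤ L (2 * αhat_o ‖e‖) + L (2 * ρhat_o ‖d‖) :=
    calc ℓq (V_oq (g_o e d)) ≤ L (αhat_o ‖e‖ + ρhat_o ‖d‖) :=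
          hℓq.1.mono (hVoq_nonneg _) ((hVoq _).trans (hαbar_oq.1.mono (norm_nonneg _) (hgo e d)))
      _ ≤ L (2 * αhat_o ‖e‖) + L (2 * ρhat_o ‖d‖) :=
          hL.1.apply_add_le (hαhat_o.1.nonneg (norm_nonneg e)) (hρhat_o.1.nonneg (norm_nonneg d))
  have hctrl : V_cq (g_c x e) ≤ αbar_cq (αhat_c r) :=
    (hVcq _).trans (hαbar_cq.1.mono (norm_nonneg _) (hgc x e))
  have hGe : L (2 * αhat_o ‖e‖) ≤ L (2 * αhat_o r) :=
    (hL.comp (h2.comp hαhat_o)).1.mono (norm_nonneg e) her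
  have hGr : G r ≤ G (β (V_p x e)) := hG.1.mono hr hrV
  simp only [G] at hGr
  linarith

theorem stmt_4 (nc no nd : ℕ) (hnc : 0 < nc) (hno : 0 < no) (hnd : 0 < nd)
    (V_oq : EuclideanSpace ℝ (Fin no) → ℝ) (V_cq : EuclideanSpace ℝ (Fin nc) → ℝ)
    (hVoq_nonneg : ∀ e, 0 ≤ V_oq e) (hVcq_nonneg : ∀ x, 0 ≤ V_cq x)
    (αbar_oq αbar_cq ℓq αlo_p αhat_c αhat_o ρhat_o : ℝ → ℝ)
    (hαbar_oq : IsClassKInf αbar_oq) (hαbar_cq : IsClassKInf αbar_cq) (hℓq : IsClassKInf ℓq)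
    (hαlo_p : IsClassKInf αlo_p) (hαhat_c : IsClassKInf αhat_c) (hαhat_o : IsClassKInf αhat_o)
    (hρhat_o : IsClassKInf ρhat_o)
    (hVoq : ∀ e, V_oq e ≤ αbar_oq ‖e‖) (hVcq : ∀ x, V_cq x ≤ αbar_cq ‖x‖)
    (V_p : EuclideanSpace ℝ (Fin nc) → EuclideanSpace ℝ (Fin no) → ℝ)
    (hVp : ∀ x e, αlo_p (Real.sqrt (‖x‖ ^ 2 + ‖e‖ ^ 2)) ≤ V_p x e)
    (g_c : EuclideanSpace ℝ (Fin nc) → EuclideanSpace ℝ (Fin no) → EuclideanSpace ℝ (Fin nc))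
    (g_o : EuclideanSpace ℝ (Fin no) → EuclideanSpace ℝ (Fin nd) → EuclideanSpace ℝ (Fin no))
    (hgc : ∀ x e, ‖g_c x e‖ ≤ αhat_c (Real.sqrt (‖x‖ ^ 2 + ‖e‖ ^ 2)))
    (hgo : ∀ e d, ‖g_o e d‖ ≤ αhat_o ‖e‖ + ρhat_o ‖d‖) :
    ∃ χ ρ : ℝ → ℝ, IsClassKInf χ ∧ IsClassKInf ρ ∧
      ∀ (x : EuclideanSpace ℝ (Fin nc)) (e : EuclideanSpace ℝ (Fin no))
        (d : EuclideanSpace ℝ (Fin nd)),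
        ℓq (V_oq (g_o e d)) + V_cq (g_c x e) ≤ χ (V_p x e) + ρ ‖d‖ :=
  stmt_4_general nc no nd V_oq V_cq hVoq_nonneg αbar_oq αbar_cq ℓq αlo_p αhat_c αhat_o ρhat_o
    hαbar_oq hαbar_cq hℓq hαlo_p hαhat_c hαhat_o hρhat_o hVoq hVcq V_p hVp g_c g_o hgc hgo
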